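/- For self-adjoint n×n complex matrices A and B, the following are equivalent: (1) there is a unitary U such that U A U* ≤ B and U A U* commutes with B; (2) λ_i(A) ≤ λ_i(B) for every i = 1, …, n, where λ_i denotes the i-th largest eigenvalue counted with multiplicity. -/

import Mathlib

/-!
If `U A U*` commutes with `B`, the two Hermitian matrices are diagonalised by one unitary `W`, as
`diag a` and `diag b`, where `a` and `b` list the spectra of `A` and `B`. Then
`B - U A U* = W diag (b - a) W*` is positive semidefinite exactly when `a ≤ b` entrywise, and
sorting preserves entrywise inequalities: the `i`-th smallest entry of a tuple is `≤ t` iff more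
than `i` entries are `≤ t`, and `a ≤ b` leaves `b` with fewer such entries than `a`.
Conversely, diagonalise `A = V_A diag a V_A*` and `B = V_B diag b V_B*` with both spectra sorted
increasingly; then `U = V_B V_A*` gives `U A U* = V_B diag a V_B*`, which commutes with `B` and
lies below it.
-/

open scoped ComplexOrder

/-- The eigenvalues of a (Hermitian) matrix arranged in non-increasing order, counted
with multiplicity; junk value `0` for non-Hermitian matrices. -/
noncomputable def eigDesc {n : ℕ} (A : Matrix (Fin n) (Fin n) ℂ) (i : Fin n) : ℝ :=
  if h : A.IsHermitian then (h.eigenvalues ∘ Tuple.sort h.eigenvalues) i.rev else 0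

open Finset Matrix Polynomial Module.End

namespace Tuple

variable {n : ℕ} {α : Type*} [LinearOrder α]

lemma card_filter_comp_sort_le (f : Fin n → α) (a : α) :
    #{i | (f ∘ sort f) i ≤ a} = #{i | f i ≤ a} :=
  card_equiv (sort f) (by simp)

lemma comp_sort_le_comp_sort_of_card_le {f g : Fin n → α}
    (h : ∀ a, #{i | g i ≤ a} ≤ #{i | f i ≤ a}) (i : Fin n) :
    (f ∘ sort f) i ≤ (g ∘ sort g) i := by
  rw [← lt_card_le_iff_apply_le_of_monotone (monotone_sort f), card_filter_comp_sort_le]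
  refine lt_of_lt_of_le ?_ (h _)
  rw [← card_filter_comp_sort_le]
  exact (lt_card_le_iff_apply_le_of_monotone (monotone_sort g)).2 le_rfl

lemma comp_sort_le_comp_sort {f g : Fin n → α} (h : ∀ i, f i ≤ g i) (i : Fin n) :
    (f ∘ sort f) i ≤ (g ∘ sort g) i :=
  comp_sort_le_comp_sort_of_card_le
    (fun _ ↦ card_le_card fun i ↦ by simpa only [mem_filter, mem_univ, true_and] using (h i).trans)
    i

lemma comp_sort_eq_comp_sort_of_map_eq {f g : Fin n → α}
    (h : univ.val.map f = univ.val.map g) : f ∘ sort f = g ∘ sort g := by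
  have hcard (a : α) : #{i | f i ≤ a} = #{i | g i ≤ a} := by
    have := congrArg (Multiset.countP (· ≤ a)) h
    rwa [Multiset.countP_map, Multiset.countP_map] at this
  funext i
  exact le_antisymm (comp_sort_le_comp_sort_of_card_le (fun a ↦ (hcard a).ge) i)
    (comp_sort_le_comp_sort_of_card_le (fun a ↦ (hcard a).le) i)

end Tuple

section Unitary

variable {R : Type*} [Monoid R] [StarMul R] {U : R}

lemma Unitary.conj_mul_conj (hU : U ∈ unitary R) (x y : R) :
    U * x * star U * (U * y * star U) = U * (x * y) * star U := by
  simp only [mul_assoc, ← mul_assoc (star U) U, Unitary.star_mul_self_of_mem hU, one_mul]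

lemma Unitary.conj_mul_star_conj (hU : U ∈ unitary R) (V x : R) :
    V * star U * (U * x * star U) * star (V * star U) = V * x * star V := by
  calc V * star U * (U * x * star U) * star (V * star U)
      = V * (star U * U) * x * (star U * U) * star V := by
        simp only [star_mul, star_star, mul_assoc]
    _ = V * x * star V := by rw [Unitary.star_mul_self_of_mem hU, mul_one, mul_one]

lemma Commute.conj_of_mem_unitary {x y : R} (h : Commute x y) (hU : U ∈ unitary R) :
    Commute (U * x * star U) (U * y * star U) := by
  rw [commute_iff_eq, Unitary.conj_mul_conj hU, Unitary.conj_mul_conj hU, h.eq]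

end Unitary

section IsSymmetric

variable {𝕜 E : Type*} [RCLike 𝕜] [NormedAddCommGroup E] [InnerProductSpace 𝕜 E]

lemma LinearMap.IsSymmetric.eigenvalue_eq_ofReal_re {T : E →ₗ[𝕜] E} (hT : T.IsSymmetric)
    {μ : 𝕜} {v : E} (hv : v ≠ 0) (hμ : v ∈ eigenspace T μ) : ((RCLike.re μ : ℝ) : 𝕜) = μ :=
  RCLike.conj_eq_iff_re.mp (hT.conj_eigenvalue_eq_self (hasEigenvalue_of_hasEigenvector ⟨hμ, hv⟩))

theorem LinearMap.IsSymmetric.exists_orthonormalBasis_eigenvectors_of_commute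
    [FiniteDimensional 𝕜 E] {ι : Type*} [Fintype ι] (hι : Module.finrank 𝕜 E = Fintype.card ι)
    {T S : E →ₗ[𝕜] E} (hT : T.IsSymmetric) (hS : S.IsSymmetric) (hTS : Commute T S) :
    ∃ (v : OrthonormalBasis ι 𝕜 E) (a b : ι → ℝ),
      ∀ i, T (v i) = (a i : 𝕜) • v i ∧ S (v i) = (b i : 𝕜) • v i := by
  classical
  let P (p : 𝕜 × 𝕜) := eigenspace T p.2 ⊓ eigenspace S p.1
  have hP₀ : DirectSum.IsInternal P := hT.directSum_isInternal_of_commute hS hTS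
  let := hP₀.submodule_iSupIndep.fintypeNeBotOfFiniteDimensional
  have hP := DirectSum.isInternal_ne_bot_iff.mpr hP₀
  have hPorth := (hT.orthogonalFamily_eigenspace_inf_eigenspace hS).comp
    (Subtype.coe_injective (p := fun p ↦ P p ≠ ⊥))
  let v := (hP.subordinateOrthonormalBasis hι hPorth).reindex (Fintype.equivFin ι).symm
  have hv (i : ι) : ∃ p : 𝕜 × 𝕜, v i ∈ P p :=
    ⟨_, by simpa [v] using
      hP.subordinateOrthonormalBasis_subordinate hι (Fintype.equivFin ι i) hPorth⟩
  choose p hp using hv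
  refine ⟨v, fun i ↦ RCLike.re (p i).2, fun i ↦ RCLike.re (p i).1, fun i ↦ ?_⟩
  obtain ⟨hT_i, hS_i⟩ := hp i
  have hvi := v.orthonormal.ne_zero i
  rw [hT.eigenvalue_eq_ofReal_re hvi hT_i, hS.eigenvalue_eq_ofReal_re hvi hS_i]
  exact ⟨mem_eigenspace_iff.mp hT_i, mem_eigenspace_iff.mp hS_i⟩

end IsSymmetric

section Matrix

variable {𝕜 : Type*} [RCLike 𝕜] {m : Type*} [Fintype m] [DecidableEq m]

lemma Matrix.charpoly_conj_of_mem_unitaryGroup {R : Type*} [CommRing R] [StarRing R]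
    {U : Matrix m m R} (hU : U ∈ unitaryGroup m R) (A : Matrix m m R) :
    (U * A * star U).charpoly = A.charpoly := by
  rw [mul_assoc, charpoly_mul_comm, mul_assoc, Unitary.star_mul_self_of_mem hU, mul_one]

lemma Matrix.posSemidef_conj_diagonal_sub_iff {V : Matrix m m 𝕜} (hV : V ∈ unitaryGroup m 𝕜)
    {a b : m → ℝ} :
    (V * diagonal (RCLike.ofReal ∘ b) * star V -
      V * diagonal (RCLike.ofReal ∘ a) * star V).PosSemidef ↔ ∀ i, a i ≤ b i := by
  rw [← sub_mul, ← mul_sub, diagonal_sub,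
    (Unitary.isUnit_coe (U := ⟨V, hV⟩)).posSemidef_star_right_conjugate_iff,
    posSemidef_diagonal_iff]
  simp only [Function.comp_apply, ← RCLike.ofReal_sub, RCLike.ofReal_nonneg, sub_nonneg]

lemma Matrix.eq_conj_diagonal_of_mulVec_eq_smul {M : Matrix m m 𝕜}
    (v : OrthonormalBasis m 𝕜 (EuclideanSpace 𝕜 m)) {d : m → 𝕜}
    (hv : ∀ j, M *ᵥ v j = d j • v j) :
    M = (EuclideanSpace.basisFun m 𝕜).toBasis.toMatrix v.toBasis * diagonal d *
      star ((EuclideanSpace.basisFun m 𝕜).toBasis.toMatrix v.toBasis) := by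
  set W := (EuclideanSpace.basisFun m 𝕜).toBasis.toMatrix v.toBasis
  have hW : W * star W = 1 := Unitary.mul_star_self_of_mem
    ((EuclideanSpace.basisFun m 𝕜).toMatrix_orthonormalBasis_mem_unitary v)
  have hMW : M * W = W * diagonal d := by
    ext i j
    rw [mul_diagonal, mul_apply]
    change ∑ k, M i k * v j k = v j i * d j
    simpa [mulVec, dotProduct, mul_comm] using congrFun (hv j) i
  rw [← hMW, mul_assoc, hW, mul_one]

lemma Matrix.IsHermitian.exists_unitary_eq_conj_diagonal_of_commute {A B : Matrix m m 𝕜}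
    (hA : A.IsHermitian) (hB : B.IsHermitian) (hAB : Commute A B) :
    ∃ W ∈ unitaryGroup m 𝕜, ∃ a b : m → ℝ,
      A = W * diagonal (RCLike.ofReal ∘ a) * star W ∧
      B = W * diagonal (RCLike.ofReal ∘ b) * star W := by
  obtain ⟨v, a, b, hv⟩ :=
    (isSymmetric_toEuclideanLin_iff.mpr hA).exists_orthonormalBasis_eigenvectors_of_commute
      finrank_euclideanSpace (isSymmetric_toEuclideanLin_iff.mpr hB)
      (hAB.map (toLpLinAlgEquiv 2))
  refine ⟨_, (EuclideanSpace.basisFun m 𝕜).toMatrix_orthonormalBasis_mem_unitary v, a, b,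
    eq_conj_diagonal_of_mulVec_eq_smul v fun j ↦ ?_,
    eq_conj_diagonal_of_mulVec_eq_smul v fun j ↦ ?_⟩
  · simpa using congrArg WithLp.ofLp (hv j).1
  · simpa using congrArg WithLp.ofLp (hv j).2

lemma Matrix.IsHermitian.exists_unitary_eq_conj_diagonal_comp_perm {A : Matrix m m 𝕜}
    (hA : A.IsHermitian) (σ : Equiv.Perm m) :
    ∃ V ∈ unitaryGroup m 𝕜, A = V * diagonal (RCLike.ofReal ∘ hA.eigenvalues ∘ σ) * star V := by
  let v := hA.eigenvectorBasis.reindex σ.symm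
  refine ⟨_, (EuclideanSpace.basisFun m 𝕜).toMatrix_orthonormalBasis_mem_unitary v,
    eq_conj_diagonal_of_mulVec_eq_smul v fun j ↦ ?_⟩
  rw [OrthonormalBasis.reindex_apply, Equiv.symm_symm, hA.mulVec_eigenvectorBasis,
    RCLike.real_smul_eq_coe_smul (K := 𝕜)]
  rfl

lemma Matrix.IsHermitian.map_eigenvalues_eq_of_charpoly_eq {A : Matrix m m 𝕜}
    (hA : A.IsHermitian) {c : m → ℝ} (h : A.charpoly = (diagonal (RCLike.ofReal ∘ c)).charpoly) :
    univ.val.map hA.eigenvalues = univ.val.map c := by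
  have hroots := congrArg roots h
  rw [hA.roots_charpoly_eq_eigenvalues, charpoly_diagonal, roots_prod _ _ (by
    simp [prod_ne_zero_iff, X_sub_C_ne_zero])] at hroots
  simp only [roots_X_sub_C, Multiset.bind_singleton, ← Multiset.map_map] at hroots
  exact Multiset.map_injective RCLike.ofReal_injective hroots

end Matrix

lemma eigDesc_rev {n : ℕ} {A : Matrix (Fin n) (Fin n) ℂ} (hA : A.IsHermitian) (i : Fin n) :
    eigDesc A i.rev = (hA.eigenvalues ∘ Tuple.sort hA.eigenvalues) i := by
  rw [eigDesc, dif_pos hA, Fin.rev_rev]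

theorem unitary_conj_le_iff_eigenvalues_le {n : ℕ} (A B : Matrix (Fin n) (Fin n) ℂ)
    (hA : A.IsHermitian) (hB : B.IsHermitian) :
    (∃ U ∈ Matrix.unitaryGroup (Fin n) ℂ,
        (B - U * A * star U).PosSemidef ∧ Commute (U * A * star U) B) ↔
      ∀ i, eigDesc A i ≤ eigDesc B i := by
  constructor
  · rintro ⟨U, hU, hle, hcomm⟩
    have hUA : (U * A * star U).IsHermitian := isHermitian_mul_mul_conjTranspose U hA
    obtain ⟨W, hW, a, b, hAW, hBW⟩ := hUA.exists_unitary_eq_conj_diagonal_of_commute hB hcomm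
    have hab : ∀ i, a i ≤ b i := (posSemidef_conj_diagonal_sub_iff hW).mp (hAW ▸ hBW ▸ hle)
    have hA_sort := Tuple.comp_sort_eq_comp_sort_of_map_eq (hA.map_eigenvalues_eq_of_charpoly_eq
      (by rw [← charpoly_conj_of_mem_unitaryGroup hU, hAW, charpoly_conj_of_mem_unitaryGroup hW]))
    have hB_sort := Tuple.comp_sort_eq_comp_sort_of_map_eq (hB.map_eigenvalues_eq_of_charpoly_eq
      (by rw [hBW, charpoly_conj_of_mem_unitaryGroup hW]))
    intro i
    rw [← i.rev_rev, eigDesc_rev hA, eigDesc_rev hB, hA_sort, hB_sort]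
    exact Tuple.comp_sort_le_comp_sort hab _
  · intro h
    obtain ⟨VA, hVA, hAV⟩ :=
      hA.exists_unitary_eq_conj_diagonal_comp_perm (Tuple.sort hA.eigenvalues)
    obtain ⟨VB, hVB, hBV⟩ :=
      hB.exists_unitary_eq_conj_diagonal_comp_perm (Tuple.sort hB.eigenvalues)
    have hUA : VB * star VA * A * star (VB * star VA) =
        VB * diagonal (RCLike.ofReal ∘ hA.eigenvalues ∘ Tuple.sort hA.eigenvalues) * star VB := by
      conv_lhs => rw [hAV]
      exact Unitary.conj_mul_star_conj hVA _ _
    refine ⟨VB * star VA, mul_mem hVB (Unitary.star_mem hVA), ?_, ?_⟩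
    · rw [hUA, hBV, posSemidef_conj_diagonal_sub_iff hVB]
      intro i
      simpa only [eigDesc_rev hA, eigDesc_rev hB] using h i.rev
    · rw [hUA, hBV]
      exact (commute_diagonal _ _).conj_of_mem_unitary hVB
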